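/- (Uniqueness part of the reconstruction theorem for singular modelled distributions, germ formulation.) Let (Λ₁^{(t)})_{t>0} and (Λ₂^{(t)})_{t>0} be families of continuous functions on ℝ^d such that, for each i ∈ {1,2}: Q_s Λ_i^{(t)} = Λ_i^{(t+s)} for all s, t > 0; sup_{0<t≤1} ‖Λ_i^{(t)}‖_{L∞(wv)} < ∞; and there is K ≥ 0 with (wv)(x) |Λ_i^{(t)}(x) − Q_t(x,F_x)| ≤ K t^{γ/ℓ} φ(x)^{η−γ} for all t ∈ (0,1] and all x with x₁ ≠ 0. Then Λ₁^{(t)} = Λ₂^{(t)} for every t > 0. -/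

import Mathlib

open MeasureTheory Set Filter Topology
open scoped ENNReal

noncomputable section

/-- The anisotropic norm `‖x‖_𝔰 = ∑ i, |x i| ^ (1 / 𝔰 i)`. -/
def sNorm {d : ℕ} (𝔰 : Fin (d + 1) → ℝ) (x : Fin (d + 1) → ℝ) : ℝ :=
  ∑ i, |x i| ^ (1 / 𝔰 i)

/-- The scaled degree `|k|_𝔰 = ∑ i, 𝔰 i * k i` of a multiindex `k`. -/
def sDeg {d : ℕ} (𝔰 : Fin (d + 1) → ℝ) (k : Fin (d + 1) → ℕ) : ℝ :=
  ∑ i, 𝔰 i * (k i : ℝ)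

/-- The rescaled function `G_t(x) = t^{-|𝔰|/ℓ} G(t^{-𝔰/ℓ} x)`. -/
def Gt {d : ℕ} (𝔰 : Fin (d + 1) → ℝ) (ℓ : ℝ) (G : (Fin (d + 1) → ℝ) → ℝ)
    (t : ℝ) (x : Fin (d + 1) → ℝ) : ℝ :=
  t ^ (-(∑ i, 𝔰 i) / ℓ) * G fun i => t ^ (-𝔰 i / ℓ) * x i

/-- The temporal weight `φ(x) = min(|x₁|^{1/𝔰₁}, 1)`. -/
def phi {d : ℕ} (𝔰 : Fin (d + 1) → ℝ) (x : Fin (d + 1) → ℝ) : ℝ :=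
  min (|x 0| ^ (1 / 𝔰 0)) 1

/-- `φ(x,y) = min(φ(x), φ(y))`. -/
def phi2 {d : ℕ} (𝔰 : Fin (d + 1) → ℝ) (x y : Fin (d + 1) → ℝ) : ℝ :=
  min (phi 𝔰 x) (phi 𝔰 y)

/-- The weighted sup norm `‖f‖_{L∞(u)} = sup_x |f x| * u x`, valued in `ℝ≥0∞`. -/
def wNorm {d : ℕ} (u f : (Fin (d + 1) → ℝ) → ℝ) : ℝ≥0∞ :=
  ⨆ x, ENNReal.ofReal (|f x| * u x)

/-- A `G`-controlled weight `w` with control function `wStar`. -/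
structure GControlled {d : ℕ} (𝔰 : Fin (d + 1) → ℝ) (ℓ : ℝ)
    (G : (Fin (d + 1) → ℝ) → ℝ) (w wStar : (Fin (d + 1) → ℝ) → ℝ) : Prop where
  cont : Continuous w
  pos : ∀ x, 0 < w x
  le_one : ∀ x, w x ≤ 1
  star_cont : Continuous wStar
  one_le_star : ∀ x, 1 ≤ wStar x
  submul : ∀ x y, w (x + y) ≤ wStar x * w y
  moment : ∀ n : ℝ, 0 ≤ n → ∀ T : ℝ, 0 < T → ∃ B : ℝ, ∀ t ∈ Set.Ioc (0 : ℝ) T,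
    ∀ x, sNorm 𝔰 x ^ n * wStar (fun i => t ^ (𝔰 i / ℓ) * x i) * G x ≤ B

/-- A `G`-type semigroup `Q`. -/
structure GSemigroup {d : ℕ} (𝔰 : Fin (d + 1) → ℝ) (ℓ : ℝ)
    (G : (Fin (d + 1) → ℝ) → ℝ)
    (Q : ℝ → (Fin (d + 1) → ℝ) → (Fin (d + 1) → ℝ) → ℝ) : Prop where
  cont : ∀ t : ℝ, 0 < t →
    Continuous fun p : (Fin (d + 1) → ℝ) × (Fin (d + 1) → ℝ) => Q t p.1 p.2
  semigroup : ∀ s t : ℝ, 0 < s → s < t → ∀ x y,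
    (∫ z, Q (t - s) x z * Q s z y) = Q t x y
  conservative : ∀ x, Tendsto (fun t => ∫ y, Q t x y) (𝓝[>] (0 : ℝ)) (𝓝 1)
  upper : ∃ C₁ : ℝ, 0 < C₁ ∧ ∀ t : ℝ, 0 < t → ∀ x y,
    |Q t x y| ≤ C₁ * Gt 𝔰 ℓ G t (x - y)
  timederiv : ∃ C₂ : ℝ, 0 < C₂ ∧ ∀ x y, ∀ t : ℝ, 0 < t → ∃ q : ℝ,
    HasDerivAt (fun s => Q s x y) q t ∧ |q| ≤ C₂ * t⁻¹ * Gt 𝔰 ℓ G t (x - y)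

/-!
Fix `t > 0` and `x`. For `0 < s ≤ min (t/2) 1` the semigroup property gives
`Λ₁ t x - Λ₂ t x = ∫ Q (t - s) x y * (Λ₁ s y - Λ₂ s y) dy`, and the two reconstruction bounds
give `(wv)(y) |Λ₁ s y - Λ₂ s y| ≤ 2 K s^(γ/ℓ) (1 + |y₀|^((η - γ)/𝔰₀))`, a weight that is
integrable across `{y₀ = 0}` because `η > γ - 𝔰₀`. Moving the weight from `x` to `y` with
`(wv)(x) ≤ (w*v*)(x - y) (wv)(y)` and using the moment bounds of `w*v*`, the kernel
`Q (t - s) x ·` is dominated, uniformly for `t - s ∈ [t/2, t]`, by a product of Cauchy densities.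
Hence `|Λ₁ t x - Λ₂ t x| ≤ C s^(γ/ℓ)` with `C` independent of `s`, and `s ↓ 0` gives equality.
-/

lemma locallyIntegrable_abs_rpow {p : ℝ} (hp : -1 < p) :
    LocallyIntegrable fun r : ℝ => |r| ^ p :=
  locallyIntegrable_of_norm_le_rpow (μ := volume) (C := 1) (α := -p) (by simp) (by simpa using neg_lt.1 hp)
    (ae_of_all _ fun r => by simp [abs_of_nonneg (Real.rpow_nonneg (abs_nonneg r) _)])
    (measurable_id.abs.pow_const _).aestronglyMeasurable

lemma integrable_mul_one_add_abs_rpow {k : ℝ → ℝ} (hk : Integrable k) (hk0 : ∀ r, 0 ≤ k r)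
    (hk1 : ∀ r, k r ≤ 1) {p : ℝ} (hp0 : p ≤ 0) (hp1 : -1 < p) :
    Integrable fun r => k r * (1 + |r| ^ p) := by
  have hsing := ((locallyIntegrable_abs_rpow hp1).integrableOn_isCompact
    (isCompact_Icc (a := -1) (b := 1))).integrable_indicator measurableSet_Icc
  refine ((hk.const_mul 2).add hsing).mono' (hk.aestronglyMeasurable.mul
    ((measurable_id.abs.pow_const _).const_add 1).aestronglyMeasurable) (ae_of_all _ fun r => ?_)
  have hpow : 0 ≤ |r| ^ p := Real.rpow_nonneg (abs_nonneg r) _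
  have hind : k r * |r| ^ p ≤ k r + (Icc (-1) 1).indicator (fun r => |r| ^ p) r := by
    by_cases hr : r ∈ Icc (-1) 1
    · rw [indicator_of_mem hr]
      nlinarith [hk0 r, hk1 r]
    · have h1 : 1 ≤ |r| := by
        contrapose! hr
        exact abs_le.1 hr.le
      have : |r| ^ p ≤ 1 := Real.rpow_le_one_of_one_le_of_nonpos h1 hp0
      rw [indicator_of_notMem hr]
      nlinarith [hk0 r]
  rw [Real.norm_eq_abs, abs_of_nonneg (by have := hk0 r; positivity), Pi.add_apply]
  linarith

lemma abs_sub_mul_le_two_mul {a b c u B : ℝ} (hu : 0 ≤ u) (ha : u * |a - c| ≤ B)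
    (hb : u * |b - c| ≤ B) : |a - b| * u ≤ 2 * B := by
  have := abs_sub_le a c b
  rw [abs_sub_comm c b] at this
  nlinarith

lemma ae_apply_ne {ι : Type*} [Fintype ι] (i : ι) (r : ℝ) : ∀ᵐ y : ι → ℝ, y i ≠ r := by
  simpa only [volume_pi] using Measure.ae_eval_ne (fun _ : ι => (volume : Measure ℝ)) i r

section CauchyKernel

variable {ι : Type*} [Fintype ι]

def cauchyKernel (a x y : ι → ℝ) : ℝ :=
  ∏ i, (1 + ((x i - y i) / a i) ^ 2)⁻¹

lemma cauchyKernel_nonneg (a x y : ι → ℝ) : 0 ≤ cauchyKernel a x y :=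
  Finset.prod_nonneg fun _ _ => by positivity

lemma integrable_inv_one_add_sub_div_sq (b : ℝ) {c : ℝ} (hc : c ≠ 0) :
    Integrable fun r : ℝ => (1 + ((b - r) / c) ^ 2)⁻¹ :=
  (integrable_inv_one_add_sq.comp_div hc).comp_sub_left b

lemma integrable_cauchyKernel {a : ι → ℝ} (ha : ∀ i, a i ≠ 0) (x : ι → ℝ) :
    Integrable (cauchyKernel a x) :=
  Integrable.fintype_prod fun i => integrable_inv_one_add_sub_div_sq (x i) (ha i)

lemma integrable_cauchyKernel_mul_one_add_abs_rpow [DecidableEq ι] {a : ι → ℝ}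
    (ha : ∀ i, a i ≠ 0) (x : ι → ℝ) (i₀ : ι) {p : ℝ} (hp0 : p ≤ 0) (hp1 : -1 < p) :
    Integrable fun y => cauchyKernel a x y * (1 + |y i₀| ^ p) := by
  have hprod := Integrable.fintype_prod (ι := ι) (f := fun i r =>
    (1 + ((x i - r) / a i) ^ 2)⁻¹ * if i = i₀ then 1 + |r| ^ p else 1) fun i => by
      split_ifs
      · exact integrable_mul_one_add_abs_rpow (integrable_inv_one_add_sub_div_sq _ (ha i))
          (fun r => by positivity) (fun r => inv_le_one_of_one_le₀ (by nlinarith)) hp0 hp1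
      · simpa using integrable_inv_one_add_sub_div_sq (x i) (ha i)
  refine hprod.congr (ae_of_all _ fun y => ?_)
  simp only [Finset.prod_mul_distrib, Finset.prod_ite_eq', Finset.mem_univ, if_true,
    cauchyKernel]

end CauchyKernel

section Anisotropic

variable {d : ℕ} {𝔰 : Fin (d + 1) → ℝ}

lemma sNorm_nonneg (𝔰 z : Fin (d + 1) → ℝ) : 0 ≤ sNorm 𝔰 z :=
  Finset.sum_nonneg fun _ _ => by positivity

lemma abs_le_sNorm_rpow {i : Fin (d + 1)} (h𝔰 : 0 < 𝔰 i) (z : Fin (d + 1) → ℝ) :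
    |z i| ≤ sNorm 𝔰 z ^ 𝔰 i := by
  calc |z i| = (|z i| ^ (1 / 𝔰 i)) ^ 𝔰 i := by
        rw [one_div, Real.rpow_inv_rpow (abs_nonneg _) h𝔰.ne']
    _ ≤ sNorm 𝔰 z ^ 𝔰 i := by
        gcongr
        exact Finset.single_le_sum (f := fun j => |z j| ^ (1 / 𝔰 j))
          (fun j _ => by positivity) (Finset.mem_univ i)

lemma one_add_sq_le_max_sNorm_rpow {i : Fin (d + 1)} (h𝔰 : 0 < 𝔰 i) (z : Fin (d + 1) → ℝ) :
    1 + z i ^ 2 ≤ 2 * max 1 (sNorm 𝔰 z) ^ (2 * 𝔰 i) := by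
  set m := max 1 (sNorm 𝔰 z)
  have hm : 1 ≤ m := le_max_left _ _
  have hz : |z i| ≤ m ^ 𝔰 i :=
    (abs_le_sNorm_rpow h𝔰 z).trans (by gcongr; exacts [sNorm_nonneg 𝔰 z, le_max_right _ _])
  have hsq : z i ^ 2 ≤ m ^ (2 * 𝔰 i) := by
    have hpow : m ^ (𝔰 i * 2) = (m ^ 𝔰 i) ^ 2 := by
      exact_mod_cast Real.rpow_mul_natCast (by linarith) (𝔰 i) 2
    rw [mul_comm, hpow, ← sq_abs]
    gcongr
  linarith [Real.one_le_rpow hm (by linarith : 0 ≤ 2 * 𝔰 i)]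

lemma prod_one_add_sq_le_max_sNorm_rpow (h𝔰 : ∀ i, 0 < 𝔰 i) (z : Fin (d + 1) → ℝ) :
    ∏ i, (1 + z i ^ 2) ≤ 2 ^ (d + 1) * max 1 (sNorm 𝔰 z) ^ (2 * ∑ i, 𝔰 i) := by
  calc ∏ i, (1 + z i ^ 2) ≤ ∏ i, 2 * max 1 (sNorm 𝔰 z) ^ (2 * 𝔰 i) :=
        Finset.prod_le_prod (fun _ _ => by positivity)
          fun i _ => one_add_sq_le_max_sNorm_rpow (h𝔰 i) z
    _ = 2 ^ (d + 1) * max 1 (sNorm 𝔰 z) ^ (2 * ∑ i, 𝔰 i) := by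
        rw [Finset.prod_mul_distrib, Finset.prod_const, Finset.card_univ, Fintype.card_fin,
          Finset.mul_sum, Real.rpow_sum_of_pos (by positivity)]

lemma phi_rpow_le (e : ℝ) (y : Fin (d + 1) → ℝ) :
    phi 𝔰 y ^ e ≤ 1 + |y 0| ^ (e / 𝔰 0) := by
  have hnn : 0 ≤ |y 0| ^ (e / 𝔰 0) := by positivity
  rcases le_total 1 (|y 0| ^ (1 / 𝔰 0)) with h | h
  · rw [phi, min_eq_right h, Real.one_rpow]
    linarith
  · rw [phi, min_eq_left h, ← Real.rpow_mul (abs_nonneg _), one_div_mul_eq_div]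
    linarith

lemma ae_abs_sub_mul_le_of_phi_rpow {u f₁ f₂ c : (Fin (d + 1) → ℝ) → ℝ} (hu : ∀ y, 0 ≤ u y)
    {B e : ℝ} (hB : 0 ≤ B) (h₁ : ∀ y, y 0 ≠ 0 → u y * |f₁ y - c y| ≤ B * phi 𝔰 y ^ e)
    (h₂ : ∀ y, y 0 ≠ 0 → u y * |f₂ y - c y| ≤ B * phi 𝔰 y ^ e) :
    ∀ᵐ y, |f₁ y - f₂ y| * u y ≤ 2 * B * (1 + |y 0| ^ (e / 𝔰 0)) := by
  filter_upwards [ae_apply_ne 0 0] with y hy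
  refine (abs_sub_mul_le_two_mul (hu y) (h₁ y hy) (h₂ y hy)).trans ?_
  rw [mul_assoc]
  gcongr
  exact phi_rpow_le e y

end Anisotropic

lemma abs_mul_le_of_abs_mul_le {q h g u ρ a C : ℝ} (ha : 0 < a) (hCg : 0 ≤ C * g)
    (hq : |q| * a ≤ C * g * u) (hh : |h| * u ≤ ρ) : |q * h| ≤ C / a * (g * ρ) := by
  rw [abs_mul, div_mul_eq_mul_div, le_div_iff₀ ha]
  calc |q| * |h| * a = |q| * a * |h| := by ring
    _ ≤ C * g * u * |h| := by gcongr
    _ = C * g * (|h| * u) := by ring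
    _ ≤ C * g * ρ := by gcongr
    _ = C * (g * ρ) := by ring

section WeightedDomination

variable {α : Type*} [MeasurableSpace α] {μ : Measure α} {q g u : α → ℝ} {a C : ℝ}

lemma integrable_mul_of_abs_mul_le (ha : 0 < a) (hCg : ∀ y, 0 ≤ C * g y)
    (hq : ∀ y, |q y| * a ≤ C * g y * u y) (hg : Integrable g μ) {h : α → ℝ} {M : ℝ}
    (hh : ∀ y, |h y| * u y ≤ M) (hm : AEStronglyMeasurable (fun y => q y * h y) μ) :
    Integrable (fun y => q y * h y) μ :=
  ((hg.mul_const M).const_mul (C / a)).mono' hm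
    (ae_of_all _ fun y => abs_mul_le_of_abs_mul_le ha (hCg y) (hq y) (hh y))

lemma abs_integral_mul_le_of_abs_mul_le (ha : 0 < a) (hCg : ∀ y, 0 ≤ C * g y)
    (hq : ∀ y, |q y| * a ≤ C * g y * u y) {h ρ : α → ℝ} {B : ℝ}
    (hgρ : Integrable (fun y => g y * ρ y) μ) (hh : ∀ᵐ y ∂μ, |h y| * u y ≤ B * ρ y) :
    |∫ y, q y * h y ∂μ| * a ≤ C * B * ∫ y, g y * ρ y ∂μ := by
  have hint := norm_integral_le_of_norm_le (f := fun y => q y * h y)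
    (hgρ.const_mul (C / a * B))
    (hh.mono fun y hy => (abs_mul_le_of_abs_mul_le ha (hCg y) (hq y) hy).trans_eq (by ring))
  rwa [integral_const_mul, Real.norm_eq_abs, div_mul_eq_mul_div, div_mul_eq_mul_div,
    le_div_iff₀ ha] at hint

lemma abs_integral_mul_sub_integral_mul_le (ha : 0 < a) (hCg : ∀ y, 0 ≤ C * g y)
    (hq : ∀ y, |q y| * a ≤ C * g y * u y) (hg : Integrable g μ)
    (hqm : AEStronglyMeasurable q μ) {h₁ h₂ ρ : α → ℝ} (hh₁m : AEStronglyMeasurable h₁ μ)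
    (hh₂m : AEStronglyMeasurable h₂ μ) {M₁ M₂ : ℝ} (hh₁ : ∀ y, |h₁ y| * u y ≤ M₁)
    (hh₂ : ∀ y, |h₂ y| * u y ≤ M₂) {B : ℝ} (hgρ : Integrable (fun y => g y * ρ y) μ)
    (hρ : ∀ᵐ y ∂μ, |h₁ y - h₂ y| * u y ≤ B * ρ y) :
    |(∫ y, q y * h₁ y ∂μ) - ∫ y, q y * h₂ y ∂μ| * a ≤ C * B * ∫ y, g y * ρ y ∂μ := by
  rw [← integral_sub (integrable_mul_of_abs_mul_le ha hCg hq hg hh₁ (hqm.mul hh₁m))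
    (integrable_mul_of_abs_mul_le ha hCg hq hg hh₂ (hqm.mul hh₂m))]
  simp_rw [← mul_sub]
  exact abs_integral_mul_le_of_abs_mul_le ha hCg hq hgρ hρ

end WeightedDomination

section Kernel

variable {d : ℕ} {𝔰 : Fin (d + 1) → ℝ} {ℓ : ℝ} {G : (Fin (d + 1) → ℝ) → ℝ}
  {u uStar : (Fin (d + 1) → ℝ) → ℝ}

lemma GControlled.exists_mul_le_prod_inv_one_add_sq (hu : GControlled 𝔰 ℓ G u uStar)
    (h𝔰 : ∀ i, 0 < 𝔰 i) (hG : ∀ z, 0 ≤ G z) {T : ℝ} (hT : 0 < T) :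
    ∃ B, 0 ≤ B ∧ ∀ τ ∈ Ioc 0 T, ∀ z,
      uStar (fun i => τ ^ (𝔰 i / ℓ) * z i) * G z ≤ B * ∏ i, (1 + z i ^ 2)⁻¹ := by
  set n := 2 * ∑ i, 𝔰 i
  obtain ⟨B₀, hB₀⟩ := hu.moment 0 le_rfl T hT
  obtain ⟨B₁, hB₁⟩ := hu.moment n
    (mul_nonneg zero_le_two (Finset.sum_nonneg fun i _ => (h𝔰 i).le)) T hT
  refine ⟨2 ^ (d + 1) * max (max B₀ B₁) 0, by positivity, fun τ hτ z => ?_⟩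
  set X := uStar (fun i => τ ^ (𝔰 i / ℓ) * z i) * G z
  have hX : 0 ≤ X := mul_nonneg (zero_le_one.trans (hu.one_le_star _)) (hG z)
  have hmoment : X * max 1 (sNorm 𝔰 z) ^ n ≤ max (max B₀ B₁) 0 := by
    refine le_max_of_le_left ?_
    rcases le_total (sNorm 𝔰 z) 1 with h | h
    · simpa [max_eq_left h, X, mul_comm] using (hB₀ τ hτ z).trans (le_max_left _ _)
    · rw [max_eq_right h, mul_comm, ← mul_assoc]
      exact (hB₁ τ hτ z).trans (le_max_right _ _)
  have hprod : 0 < ∏ i, (1 + z i ^ 2) := Finset.prod_pos fun _ _ => by positivity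
  rw [Finset.prod_inv_distrib, ← div_eq_mul_inv, le_div_iff₀ hprod]
  calc X * ∏ i, (1 + z i ^ 2) ≤ X * (2 ^ (d + 1) * max 1 (sNorm 𝔰 z) ^ n) :=
        mul_le_mul_of_nonneg_left (prod_one_add_sq_le_max_sNorm_rpow h𝔰 z) hX
    _ = 2 ^ (d + 1) * (X * max 1 (sNorm 𝔰 z) ^ n) := by ring
    _ ≤ 2 ^ (d + 1) * max (max B₀ B₁) 0 := by gcongr

lemma inv_one_add_div_sq_le_of_le {c τ t : ℝ} (hτ : 0 < τ) (hτt : τ ≤ t) :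
    (1 + (c / τ) ^ 2)⁻¹ ≤ (1 + (c / t) ^ 2)⁻¹ := by
  rw [div_pow, div_pow]
  gcongr

lemma GSemigroup.continuous_apply {Q : ℝ → (Fin (d + 1) → ℝ) → (Fin (d + 1) → ℝ) → ℝ}
    (hQ : GSemigroup 𝔰 ℓ G Q) {t : ℝ} (ht : 0 < t) (x : Fin (d + 1) → ℝ) :
    Continuous (Q t x) :=
  (hQ.cont t ht).comp (continuous_const.prodMk continuous_id)

lemma GSemigroup.exists_abs_mul_le_cauchyKernel
    {Q : ℝ → (Fin (d + 1) → ℝ) → (Fin (d + 1) → ℝ) → ℝ} (hQ : GSemigroup 𝔰 ℓ G Q)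
    (hu : GControlled 𝔰 ℓ G u uStar) (h𝔰 : ∀ i, 0 < 𝔰 i) (hℓ : 0 < ℓ) (hG : ∀ z, 0 ≤ G z)
    {t : ℝ} (ht : 0 < t) :
    ∃ C, 0 ≤ C ∧ ∀ τ ∈ Icc (t / 2) t, ∀ x y,
      |Q τ x y| * u x ≤ C * cauchyKernel (fun i => t ^ (𝔰 i / ℓ)) x y * u y := by
  obtain ⟨C₁, hC₁, hQC₁⟩ := hQ.upper
  obtain ⟨B, hB, hdecay⟩ := hu.exists_mul_le_prod_inv_one_add_sq h𝔰 hG ht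
  refine ⟨C₁ * (t / 2) ^ (-(∑ i, 𝔰 i) / ℓ) * B, by positivity, fun τ hτ x y => ?_⟩
  have hτ0 : 0 < τ := (half_pos ht).trans_le hτ.1
  set z : Fin (d + 1) → ℝ := fun i => (x i - y i) / τ ^ (𝔰 i / ℓ)
  have hGt : Gt 𝔰 ℓ G τ (x - y) = τ ^ (-(∑ i, 𝔰 i) / ℓ) * G z := by
    simp only [Gt, z, neg_div, Real.rpow_neg hτ0.le, Pi.sub_apply, inv_mul_eq_div]
  have hxy : (fun i => τ ^ (𝔰 i / ℓ) * z i) = x - y := by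
    ext i
    exact mul_div_cancel₀ _ (Real.rpow_pos_of_pos hτ0 _).ne'
  have hz : ∏ i, (1 + z i ^ 2)⁻¹ ≤ cauchyKernel (fun i => t ^ (𝔰 i / ℓ)) x y :=
    Finset.prod_le_prod (fun _ _ => by positivity) fun i _ =>
      inv_one_add_div_sq_le_of_le (Real.rpow_pos_of_pos hτ0 _)
        (Real.rpow_le_rpow hτ0.le hτ.2 (div_nonneg (h𝔰 i).le hℓ.le))
  have hpow : τ ^ (-(∑ i, 𝔰 i) / ℓ) ≤ (t / 2) ^ (-(∑ i, 𝔰 i) / ℓ) :=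
    Real.rpow_le_rpow_of_nonpos (half_pos ht) hτ.1
      (div_nonpos_of_nonpos_of_nonneg (neg_nonpos.2 (Finset.sum_nonneg fun i _ => (h𝔰 i).le))
        hℓ.le)
  have hX : uStar (fun i => τ ^ (𝔰 i / ℓ) * z i) * G z
      ≤ B * cauchyKernel (fun i => t ^ (𝔰 i / ℓ)) x y :=
    (hdecay τ ⟨hτ0, hτ.2⟩ z).trans (by gcongr)
  have hux : u x ≤ uStar (x - y) * u y := by simpa using hu.submul (x - y) y
  calc |Q τ x y| * u x
      ≤ C₁ * Gt 𝔰 ℓ G τ (x - y) * (uStar (x - y) * u y) :=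
        mul_le_mul (hQC₁ τ hτ0 x y) hux (hu.pos x).le (by rw [hGt]; have := hG z; positivity)
    _ = C₁ * τ ^ (-(∑ i, 𝔰 i) / ℓ) * (uStar (fun i => τ ^ (𝔰 i / ℓ) * z i) * G z) * u y := by
        rw [hGt, hxy]; ring
    _ ≤ C₁ * (t / 2) ^ (-(∑ i, 𝔰 i) / ℓ) * (B * cauchyKernel (fun i => t ^ (𝔰 i / ℓ)) x y)
          * u y := by
        refine mul_le_mul_of_nonneg_right (mul_le_mul (by gcongr) hX ?_ (by positivity))
          (hu.pos y).le
        exact mul_nonneg (zero_le_one.trans (hu.one_le_star _)) (hG z)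
    _ = C₁ * (t / 2) ^ (-(∑ i, 𝔰 i) / ℓ) * B * cauchyKernel (fun i => t ^ (𝔰 i / ℓ)) x y * u y :=
        by ring

lemma GSemigroup.exists_abs_integral_sub_mul_le
    {Q : ℝ → (Fin (d + 1) → ℝ) → (Fin (d + 1) → ℝ) → ℝ} (hQ : GSemigroup 𝔰 ℓ G Q)
    (hu : GControlled 𝔰 ℓ G u uStar) (h𝔰 : ∀ i, 0 < 𝔰 i) (hℓ : 0 < ℓ) (hG : ∀ z, 0 ≤ G z)
    {p : ℝ} (hp0 : p ≤ 0) (hp1 : -1 < p) {t : ℝ} (ht : 0 < t) (x : Fin (d + 1) → ℝ) :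
    ∃ C, ∀ τ ∈ Icc (t / 2) t, ∀ f₁ f₂ : (Fin (d + 1) → ℝ) → ℝ, Continuous f₁ → Continuous f₂ →
      ∀ M₁ M₂ B : ℝ, (∀ y, |f₁ y| * u y ≤ M₁) → (∀ y, |f₂ y| * u y ≤ M₂) →
      (∀ᵐ y, |f₁ y - f₂ y| * u y ≤ B * (1 + |y 0| ^ p)) →
      |(∫ y, Q τ x y * f₁ y) - ∫ y, Q τ x y * f₂ y| * u x ≤ C * B := by
  obtain ⟨C, hC, hQC⟩ := hQ.exists_abs_mul_le_cauchyKernel hu h𝔰 hℓ hG ht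
  have hscale : ∀ i, t ^ (𝔰 i / ℓ) ≠ 0 := fun i => (Real.rpow_pos_of_pos ht _).ne'
  refine ⟨C * ∫ y, cauchyKernel (fun i => t ^ (𝔰 i / ℓ)) x y * (1 + |y 0| ^ p),
    fun τ hτ f₁ f₂ hf₁ hf₂ M₁ M₂ B hM₁ hM₂ hB => ?_⟩
  have hτ0 : 0 < τ := (half_pos ht).trans_le hτ.1
  refine (abs_integral_mul_sub_integral_mul_le (hu.pos x)
    (fun y => mul_nonneg hC (cauchyKernel_nonneg ..)) (hQC τ hτ x)
    (integrable_cauchyKernel hscale x) (hQ.continuous_apply hτ0 x).aestronglyMeasurable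
    hf₁.aestronglyMeasurable hf₂.aestronglyMeasurable hM₁ hM₂
    (integrable_cauchyKernel_mul_one_add_abs_rpow hscale x 0 hp0 hp1) hB).trans_eq (by ring)

end Kernel

lemma exists_abs_mul_le_of_iSup_wNorm_lt_top {d : ℕ} {u : (Fin (d + 1) → ℝ) → ℝ}
    {Λ : ℝ → (Fin (d + 1) → ℝ) → ℝ} (h : (⨆ t ∈ Ioc (0 : ℝ) 1, wNorm u (Λ t)) < ⊤) :
    ∃ M, ∀ s ∈ Ioc (0 : ℝ) 1, ∀ y, |Λ s y| * u y ≤ M :=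
  ⟨_, fun s hs y => (ENNReal.ofReal_le_iff_le_toReal h.ne).1 <|
    (le_iSup (fun z => ENNReal.ofReal (|Λ s z| * u z)) y).trans
      (le_biSup (fun t => wNorm u (Λ t)) hs)⟩

lemma eq_zero_of_forall_le_mul_rpow {a c p δ : ℝ} (hp : 0 < p) (hδ : 0 < δ) (ha : 0 ≤ a)
    (h : ∀ s ∈ Ioc 0 δ, a ≤ c * s ^ p) : a = 0 := by
  have hlim : Tendsto (fun s : ℝ => c * s ^ p) (𝓝[>] 0) (𝓝 0) := by
    simpa [Real.zero_rpow hp.ne'] using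
      (((Real.continuous_rpow_const hp.le).tendsto 0).const_mul c).mono_left nhdsWithin_le_nhds
  refine le_antisymm (ge_of_tendsto hlim ?_) ha
  filter_upwards [Ioc_mem_nhdsGT hδ] with s hs using h s hs

theorem singular_reconstruction_unique_general
    {d : ℕ} (𝔰 : Fin (d + 1) → ℝ) (h𝔰 : ∀ i, 1 ≤ 𝔰 i) (ℓ : ℝ) (hℓ : 0 < ℓ)
    (G : (Fin (d + 1) → ℝ) → ℝ) (hGnonneg : ∀ x, 0 ≤ G x)
    (w wStar v vStar : (Fin (d + 1) → ℝ) → ℝ)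
    (hwv : GControlled 𝔰 ℓ G (fun x => w x * v x) (fun x => wStar x * vStar x))
    (Q : ℝ → (Fin (d + 1) → ℝ) → (Fin (d + 1) → ℝ) → ℝ) (hQ : GSemigroup 𝔰 ℓ G Q)
    (γ η : ℝ) (hγ : 0 < γ) (hη1 : γ - 𝔰 0 < η) (hη2 : η ≤ γ)
    (F : (Fin (d + 1) → ℝ) → (Fin (d + 1) → ℝ) → ℝ)
    (Λ₁ Λ₂ : ℝ → (Fin (d + 1) → ℝ) → ℝ)
    (h₁cont : ∀ t : ℝ, 0 < t → Continuous (Λ₁ t))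
    (h₂cont : ∀ t : ℝ, 0 < t → Continuous (Λ₂ t))
    (h₁sg : ∀ s t : ℝ, 0 < s → 0 < t → ∀ x, (∫ y, Q s x y * Λ₁ t y) = Λ₁ (t + s) x)
    (h₂sg : ∀ s t : ℝ, 0 < s → 0 < t → ∀ x, (∫ y, Q s x y * Λ₂ t y) = Λ₂ (t + s) x)
    (h₁bdd : (⨆ t ∈ Set.Ioc (0 : ℝ) 1, wNorm (fun z => w z * v z) (Λ₁ t)) < ⊤)
    (h₂bdd : (⨆ t ∈ Set.Ioc (0 : ℝ) 1, wNorm (fun z => w z * v z) (Λ₂ t)) < ⊤)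
    (K : ℝ) (hK : 0 ≤ K)
    (h₁rec : ∀ t ∈ Set.Ioc (0 : ℝ) 1, ∀ x : Fin (d + 1) → ℝ, x 0 ≠ 0 →
      w x * v x * |Λ₁ t x - ∫ z, Q t x z * F x z|
        ≤ K * t ^ (γ / ℓ) * phi 𝔰 x ^ (η - γ))
    (h₂rec : ∀ t ∈ Set.Ioc (0 : ℝ) 1, ∀ x : Fin (d + 1) → ℝ, x 0 ≠ 0 →
      w x * v x * |Λ₂ t x - ∫ z, Q t x z * F x z|
        ≤ K * t ^ (γ / ℓ) * phi 𝔰 x ^ (η - γ)) :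
    ∀ t : ℝ, 0 < t → Λ₁ t = Λ₂ t := by
  have h𝔰₀ : ∀ i, 0 < 𝔰 i := fun i => one_pos.trans_le (h𝔰 i)
  have hp0 : (η - γ) / 𝔰 0 ≤ 0 := div_nonpos_of_nonpos_of_nonneg (by linarith) (h𝔰₀ 0).le
  have hp1 : -1 < (η - γ) / 𝔰 0 := by rw [lt_div_iff₀ (h𝔰₀ 0)]; linarith
  obtain ⟨M₁, hM₁⟩ := exists_abs_mul_le_of_iSup_wNorm_lt_top h₁bdd
  obtain ⟨M₂, hM₂⟩ := exists_abs_mul_le_of_iSup_wNorm_lt_top h₂bdd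
  intro t ht
  funext x
  obtain ⟨C, hC⟩ := hQ.exists_abs_integral_sub_mul_le hwv h𝔰₀ hℓ hGnonneg hp0 hp1 ht x
  have hwx := hwv.pos x
  suffices |Λ₁ t x - Λ₂ t x| * (w x * v x) = 0 by simpa [hwx.ne', sub_eq_zero] using this
  refine eq_zero_of_forall_le_mul_rpow (c := C * (2 * K)) (div_pos hγ hℓ)
    (lt_min (half_pos ht) one_pos) (by positivity) fun s hs => ?_
  have hs1 : s ∈ Ioc 0 1 := ⟨hs.1, hs.2.trans (min_le_right _ _)⟩
  have hτ : t - s ∈ Icc (t / 2) t :=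
    ⟨by linarith [hs.2.trans (min_le_left _ _)], by linarith [hs.1]⟩
  have hτ0 : 0 < t - s := (half_pos ht).trans_le hτ.1
  calc |Λ₁ t x - Λ₂ t x| * (w x * v x)
      = |(∫ y, Q (t - s) x y * Λ₁ s y) - ∫ y, Q (t - s) x y * Λ₂ s y| * (w x * v x) := by
        rw [h₁sg _ _ hτ0 hs.1, h₂sg _ _ hτ0 hs.1, add_sub_cancel]
    _ ≤ C * (2 * (K * s ^ (γ / ℓ))) :=
        hC _ hτ _ _ (h₁cont s hs.1) (h₂cont s hs.1) _ _ _ (hM₁ s hs1) (hM₂ s hs1)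
          (ae_abs_sub_mul_le_of_phi_rpow (fun y => (hwv.pos y).le)
            (mul_nonneg hK (Real.rpow_nonneg hs.1.le _)) (h₁rec s hs1) (h₂rec s hs1))
    _ = _ := by ring

/-- uniqueness part of Theorem 3.7, germ formulation. -/
theorem singular_reconstruction_unique
    {d : ℕ} (𝔰 : Fin (d + 1) → ℝ) (h𝔰 : ∀ i, 1 ≤ 𝔰 i) (ℓ : ℝ) (hℓ : 0 < ℓ)
    (G : (Fin (d + 1) → ℝ) → ℝ) (hGmeas : Measurable G) (hGnonneg : ∀ x, 0 ≤ G x)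
    (w wStar v vStar : (Fin (d + 1) → ℝ) → ℝ)
    (hw : GControlled 𝔰 ℓ G w wStar) (hv : GControlled 𝔰 ℓ G v vStar)
    (hwv : GControlled 𝔰 ℓ G (fun x => w x * v x) (fun x => wStar x * vStar x))
    (Q : ℝ → (Fin (d + 1) → ℝ) → (Fin (d + 1) → ℝ) → ℝ) (hQ : GSemigroup 𝔰 ℓ G Q)
    (γ η : ℝ) (hγ : 0 < γ) (hη1 : γ - 𝔰 0 < η) (hη2 : η ≤ γ)
    (A : Finset ℝ) (hA : A.Nonempty) (hAγ : ∀ a ∈ A, a < γ)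
    (F : (Fin (d + 1) → ℝ) → (Fin (d + 1) → ℝ) → ℝ)
    (hFcont : ∀ x, Continuous (F x))
    (D₁ D₂ : ℝ) (hD₁ : 0 ≤ D₁) (hD₂ : 0 ≤ D₂)
    (hsize : ∀ t ∈ Set.Ioc (0 : ℝ) 1, ∀ x : Fin (d + 1) → ℝ, x 0 ≠ 0 →
      w x * v x * |∫ z, Q t x z * F x z|
        ≤ D₁ * ∑ a ∈ A, t ^ (a / ℓ) * phi 𝔰 x ^ min (η - a) 0)
    (hcoh : ∀ t ∈ Set.Ioc (0 : ℝ) 1, ∀ x y : Fin (d + 1) → ℝ, x 0 ≠ 0 → y 0 ≠ 0 →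
      w y * v y * |∫ z, Q t x z * (F y z - F x z)|
        ≤ D₂ * (wStar (y - x) * vStar (y - x)) *
            ∑ a ∈ A, t ^ (a / ℓ) * phi2 𝔰 x y ^ (η - γ) * sNorm 𝔰 (y - x) ^ (γ - a))
    (Λ₁ Λ₂ : ℝ → (Fin (d + 1) → ℝ) → ℝ)
    (h₁cont : ∀ t : ℝ, 0 < t → Continuous (Λ₁ t))
    (h₂cont : ∀ t : ℝ, 0 < t → Continuous (Λ₂ t))
    (h₁sg : ∀ s t : ℝ, 0 < s → 0 < t → ∀ x, (∫ y, Q s x y * Λ₁ t y) = Λ₁ (t + s) x)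
    (h₂sg : ∀ s t : ℝ, 0 < s → 0 < t → ∀ x, (∫ y, Q s x y * Λ₂ t y) = Λ₂ (t + s) x)
    (h₁bdd : (⨆ t ∈ Set.Ioc (0 : ℝ) 1, wNorm (fun z => w z * v z) (Λ₁ t)) < ⊤)
    (h₂bdd : (⨆ t ∈ Set.Ioc (0 : ℝ) 1, wNorm (fun z => w z * v z) (Λ₂ t)) < ⊤)
    (K : ℝ) (hK : 0 ≤ K)
    (h₁rec : ∀ t ∈ Set.Ioc (0 : ℝ) 1, ∀ x : Fin (d + 1) → ℝ, x 0 ≠ 0 →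
      w x * v x * |Λ₁ t x - ∫ z, Q t x z * F x z|
        ≤ K * t ^ (γ / ℓ) * phi 𝔰 x ^ (η - γ))
    (h₂rec : ∀ t ∈ Set.Ioc (0 : ℝ) 1, ∀ x : Fin (d + 1) → ℝ, x 0 ≠ 0 →
      w x * v x * |Λ₂ t x - ∫ z, Q t x z * F x z|
        ≤ K * t ^ (γ / ℓ) * phi 𝔰 x ^ (η - γ)) :
    ∀ t : ℝ, 0 < t → Λ₁ t = Λ₂ t :=
  singular_reconstruction_unique_general 𝔰 h𝔰 ℓ hℓ G hGnonneg w wStar v vStar hwv Q hQ γ η hγ hη1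
    hη2 F Λ₁ Λ₂ h₁cont h₂cont h₁sg h₂sg h₁bdd h₂bdd K hK h₁rec h₂rec
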